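/- arXiv:1907.03177 — 10 statements merged into one kernel-verified Lean document; each statement's English description precedes it below -/
import Mathlib

section
/- If Γ is an edge-colored bipartite graph with parts F and K, viewed as an F×K array A with entry * when (j,k) is not an edge and with entry the color of (j,k) otherwise, then A is a placement delivery array if and only if (i) every vertex of K has the same degree, and (ii) the edge coloring is a strong edge coloring (no two edges of the same color are adjacent to a common edge). -/
/-- A `(K,F,Z,S)`-placement delivery array: an `F × K` array with entries
`*` (encoded `none`) or integers in `{1,...,S}`, each integer appearing at least
once, with `Z` stars per column, no integer repeated in a row or column, and the
crossing-star condition. -/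
def IsPDA (K F Z S : ℕ) (P : Fin F → Fin K → Option ℕ) : Prop :=
  (∀ j k s, P j k = some s → 1 ≤ s ∧ s ≤ S) ∧
  (∀ s, 1 ≤ s → s ≤ S → ∃ j k, P j k = some s) ∧
  (∀ k, (Finset.univ.filter fun j => P j k = none).card = Z) ∧
  (∀ j k k' s, P j k = some s → P j k' = some s → k = k') ∧
  (∀ j j' k s, P j k = some s → P j' k = some s → j = j') ∧
  (∀ j j' k k' s, j ≠ j' → k ≠ k' → P j k = some s → P j' k' = some s →
    P j k' = none ∧ P j' k = none)

/-- A strong edge coloring, with colors from `Cols`, of the bipartite graph with parts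
`V`, `W` and edge set `E`, encoded as the triple system `C`: every triple is a
colored edge, every color of `Cols` is used, every edge gets exactly one color, and
two distinct edges with the same color share no vertex and are not adjacent to a
common edge. -/
def IsStrongEdgeColoringOn {V W S : Type*} (E : Set (V × W)) (Cols : Set S)
    (C : Set (V × W × S)) : Prop :=
  (∀ v w s, (v, w, s) ∈ C → (v, w) ∈ E ∧ s ∈ Cols) ∧
  (∀ s ∈ Cols, ∃ v w, (v, w, s) ∈ C) ∧
  (∀ v w, (v, w) ∈ E → ∃! s, (v, w, s) ∈ C) ∧
  (∀ v w s v' w', (v, w, s) ∈ C → (v', w', s) ∈ C → (v, w) ≠ (v', w') →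
    v ≠ v' ∧ w ≠ w' ∧ (v, w') ∉ E ∧ (v', w) ∉ E)

/-- An `F × K` array `A` over `{*} ∪ {1,...,S}` (with all integers used) is a PDA
iff, in the corresponding edge-colored bipartite graph (edges = non-`*` cells,
colors = integer entries), every vertex of `K` has the same degree and the edge
coloring is a strong edge coloring. -/
theorem pda_iff_constant_degree_and_strong_edge_coloring
    {F K S : ℕ} (A : Fin F → Fin K → Option ℕ)
    (hRange : ∀ j k s, A j k = some s → 1 ≤ s ∧ s ≤ S)
    (hUsed : ∀ s, 1 ≤ s → s ≤ S → ∃ j k, A j k = some s) :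
    (∃ Z, IsPDA K F Z S A) ↔
      ((∃ d, ∀ k, (Finset.univ.filter fun j => A j k ≠ none).card = d) ∧
        IsStrongEdgeColoringOn {p : Fin F × Fin K | A p.1 p.2 ≠ none}
          {s : ℕ | 1 ≤ s ∧ s ≤ S}
          {t : Fin F × Fin K × ℕ | A t.1 t.2.1 = some t.2.2}) := by
  have hcard : ∀ k : Fin K,
      (Finset.univ.filter fun j => A j k = none).card +
        (Finset.univ.filter fun j => A j k ≠ none).card = F := by
    intro k
    have := Finset.card_filter_add_card_filter_not
      (s := (Finset.univ : Finset (Fin F))) (p := fun j => A j k = none)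
    simpa using this
  constructor
  · rintro ⟨Z, _, _, hZ, hrow, hcol, hcross⟩
    refine ⟨⟨F - Z, fun k => ?_⟩, ?_, ?_, ?_, ?_⟩
    · have := hcard k
      rw [hZ k] at this
      omega
    · intro j k s h
      exact ⟨by simp_all, hRange j k s h⟩
    · intro s hs
      obtain ⟨j, k, h⟩ := hUsed s hs.1 hs.2
      exact ⟨j, k, h⟩
    · intro j k h
      simp only [Set.mem_setOf_eq, ne_eq] at h
      obtain ⟨s, hs⟩ := Option.ne_none_iff_exists'.mp h
      exact ⟨s, hs, fun s' hs' => by simp_all⟩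
    · intro j k s j' k' h1 h2 hne
      simp only [Set.mem_setOf_eq] at h1 h2
      have hj : j ≠ j' := by
        rintro rfl
        exact hne (by rw [hrow j k k' s h1 h2])
      have hk : k ≠ k' := by
        rintro rfl
        exact hj (hcol j j' k s h1 h2)
      obtain ⟨c1, c2⟩ := hcross j j' k k' s hj hk h1 h2
      exact ⟨hj, hk, by simp [c1], by simp [c2]⟩
  · rintro ⟨⟨d, hd⟩, hC, _, _, hstrong⟩
    refine ⟨F - d, hRange, hUsed, fun k => ?_, ?_, ?_, ?_⟩
    · have := hcard k
      rw [hd k] at this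
      have hdF : d ≤ F := by
        have := Finset.card_filter_le (Finset.univ : Finset (Fin F))
          (fun j => A j k ≠ none)
        rw [hd k] at this; simpa using this
      omega
    · intro j k k' s h1 h2
      by_contra hne
      have := hstrong j k s j k' h1 h2 (by simp [hne])
      exact this.1 rfl
    · intro j j' k s h1 h2
      by_contra hne
      have := hstrong j k s j' k h1 h2 (by simp [hne])
      exact this.2.1 rfl
    · intro j j' k k' s hj hk h1 h2
      have := hstrong j k s j' k' h1 h2 (by simp [hj])
      constructor
      · have := this.2.2.1
        simp only [Set.mem_setOf_eq, ne_eq, not_not] at this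
        exact this
      · have := this.2.2.2
        simp only [Set.mem_setOf_eq, ne_eq, not_not] at this
        exact this
end

section
/- Let Γ1=(V1,W1,E1) and Γ2=(V2,W2,E2) be bipartite graphs with strong edge colorings E1 and E2 respectively, both using colors from the same set S. Define V = W1, W = {(x,u) ∈ V1×V2 : there exist y∈W1, v∈W2, s∈S with (x,y,s)∈E1 and (u,v,s)∈E2}, and E = {(y,(x,u)) : there exist s∈S, v∈W2 with (x,y,s)∈E1 and (u,v,s)∈E2}. Then the triple system E' = {(y,(x,u),(s,v)) : (x,y,s)∈E1 and (u,v,s)∈E2} is a strong edge coloring of the bipartite graph (V,W,E) with colors from Σ = {(s,v)∈S×W2 : (u,v,s)∈E2 for some u∈V2}. -/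
/-- Combining two strong edge colorings `C1`, `C2` (on bipartite graphs
`(V1,W1,E1)`, `(V2,W2,E2)`) sharing the color set `S` yields a strong edge
coloring of the bipartite graph with parts `W1` and
`{(x,u) : ∃ y v s, (x,y,s) ∈ C1 ∧ (u,v,s) ∈ C2}`, with edges
`{(y,(x,u)) : ∃ s v, (x,y,s) ∈ C1 ∧ (u,v,s) ∈ C2}`, colors from
`{(s,v) : ∃ u, (u,v,s) ∈ C2}`, given by the triples
`(y,(x,u),(s,v))` with `(x,y,s) ∈ C1` and `(u,v,s) ∈ C2`. -/
theorem combined_strongEdgeColoring {V1 W1 V2 W2 S : Type*}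
    (E1 : Set (V1 × W1)) (E2 : Set (V2 × W2))
    (C1 : Set (V1 × W1 × S)) (C2 : Set (V2 × W2 × S))
    (h1 : IsStrongEdgeColoringOn E1 Set.univ C1)
    (h2 : IsStrongEdgeColoringOn E2 Set.univ C2) :
    IsStrongEdgeColoringOn
      {p : W1 × (V1 × V2) | ∃ s v, (p.2.1, p.1, s) ∈ C1 ∧ (p.2.2, v, s) ∈ C2}
      {c : S × W2 | ∃ u, (u, c.2, c.1) ∈ C2}
      {t : W1 × (V1 × V2) × (S × W2) |
        (t.2.1.1, t.1, t.2.2.1) ∈ C1 ∧ (t.2.1.2, t.2.2.2, t.2.2.1) ∈ C2} := by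
  obtain ⟨h1a, h1b, h1c, h1d⟩ := h1
  obtain ⟨h2a, h2b, h2c, h2d⟩ := h2
  -- color uniqueness in C1
  have u1 : ∀ x y s s', (x, y, s) ∈ C1 → (x, y, s') ∈ C1 → s = s' := by
    intro x y s s' hs hs'
    obtain ⟨t, _, ht⟩ := h1c x y (h1a x y s hs).1
    exact (ht s hs).trans (ht s' hs').symm
  -- same vertex, same color in C2 forces same other endpoint
  have u2 : ∀ u v v' s, (u, v, s) ∈ C2 → (u, v', s) ∈ C2 → v = v' := by
    intro u v v' s hv hv'
    by_contra hne
    have := h2d u v s u v' hv hv' (by simp [hne])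
    exact this.1 rfl
  have u2' : ∀ u u' v s, (u, v, s) ∈ C2 → (u', v, s) ∈ C2 → u = u' := by
    intro u u' v s hv hv'
    by_contra hne
    have := h2d u v s u' v hv hv' (by simp [hne])
    exact this.2.1 rfl
  refine ⟨?_, ?_, ?_, ?_⟩
  · rintro y ⟨x, u⟩ ⟨s, v⟩ ⟨hc1, hc2⟩
    exact ⟨⟨s, v, hc1, hc2⟩, ⟨u, hc2⟩⟩
  · rintro ⟨s, v⟩ ⟨u, hc2⟩
    obtain ⟨x, y, hc1⟩ := h1b s (Set.mem_univ s)
    exact ⟨y, ⟨x, u⟩, hc1, hc2⟩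
  · rintro y ⟨x, u⟩ ⟨s, v, hc1, hc2⟩
    refine ⟨(s, v), ⟨hc1, hc2⟩, ?_⟩
    rintro ⟨s', v'⟩ ⟨hc1', hc2'⟩
    have hs : s' = s := u1 x y s' s hc1' hc1
    subst hs
    have hv : v' = v := u2 u v' v s' hc2' hc2
    simp [hv]
  · rintro y ⟨x, u⟩ ⟨s, v⟩ y' ⟨x', u'⟩ ⟨hc1, hc2⟩ ⟨hc1', hc2'⟩ hne
    have hu : u = u' := u2' u u' v s hc2 hc2'
    subst hu
    have hxy : (x, y) ≠ (x', y') := by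
      rintro h
      apply hne
      rw [(Prod.mk.injEq ..).mp h |>.1, (Prod.mk.injEq ..).mp h |>.2]
    obtain ⟨hx, hy, hE, hE'⟩ := h1d x y s x' y' hc1 hc1' hxy
    refine ⟨hy, by simp [hx], ?_, ?_⟩
    · rintro ⟨t, w, ht1, ht2⟩
      exact hE' (h1a x' y t ht1).1
    · rintro ⟨t, w, ht1, ht2⟩
      exact hE (h1a x y' t ht1).1
end

section
/- In the edge coloring E' constructed by combining two same-color-set strong edge colorings E1, E2 (as in the combination construction), if (y,(x,u),(s,v)) and (y',(x',u'),(s,v)) are two distinct triples with the same color (s,v), then u = u' and x ≠ x'. -/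
/-- In the combined coloring
`E' = {(y,(x,u),(s,v)) : (x,y,s) ∈ C1 ∧ (u,v,s) ∈ C2}` of two same-color-set
strong edge colorings, two distinct triples `(y,(x,u),(s,v))`,
`(y',(x',u'),(s,v))` with the same color `(s,v)` satisfy `u = u'` and `x ≠ x'`. -/
theorem combined_coloring_same_color {V1 W1 V2 W2 S : Type*}
    (E1 : Set (V1 × W1)) (E2 : Set (V2 × W2))
    (C1 : Set (V1 × W1 × S)) (C2 : Set (V2 × W2 × S))
    (h1 : IsStrongEdgeColoringOn E1 Set.univ C1)
    (h2 : IsStrongEdgeColoringOn E2 Set.univ C2)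
    (x x' : V1) (y y' : W1) (u u' : V2) (v : W2) (s : S)
    (hxy : (x, y, s) ∈ C1) (huv : (u, v, s) ∈ C2)
    (hxy' : (x', y', s) ∈ C1) (huv' : (u', v, s) ∈ C2)
    (hne : ((y, (x, u), (s, v)) : W1 × (V1 × V2) × (S × W2)) ≠ (y', (x', u'), (s, v))) :
    u = u' ∧ x ≠ x' := by
  obtain ⟨-, -, -, hs2⟩ := h2
  obtain ⟨-, -, -, hs1⟩ := h1
  have hu : u = u' := by
    by_contra huu
    have := hs2 u v s u' v huv huv' (by simp [huu])
    exact this.2.1 rfl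
  refine ⟨hu, fun hxx => ?_⟩
  have hyy : (x, y) ≠ (x', y') → x ≠ x' := fun h => (hs1 x y s x' y' hxy hxy' h).1
  by_cases h : (x, y) = (x', y')
  · obtain ⟨h1', h2'⟩ := Prod.mk.injEq .. ▸ h
    exact hne (by subst hu hxx h2'; rfl)
  · exact hyy h hxx
end

section
/- Let Γ_i = (V_i, E_i) for 1 ≤ i ≤ l be graphs, at least one of which is bipartite, each equipped with a strong edge coloring E_i using colors from S_i. Then the tensor product Γ1 × ⋯ × Γl is bipartite, and E = {((x1,...,xl),(y1,...,yl),(s1,...,sl)) : (x_i,y_i,s_i) ∈ E_i for each i} is a strong edge coloring of the tensor product with colors from S1 × ⋯ × Sl. -/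
/-- A strong edge coloring of a (general, undirected) simple graph `G`, with
colors from `Cols`, encoded symmetrically as triples `(x, y, s)`. -/
def IsStrongEdgeColoringSGOn {V S : Type*} (G : SimpleGraph V) (Cols : Set S)
    (C : Set (V × V × S)) : Prop :=
  (∀ x y s, (x, y, s) ∈ C → G.Adj x y ∧ s ∈ Cols) ∧
  (∀ x y s, (x, y, s) ∈ C → (y, x, s) ∈ C) ∧
  (∀ s ∈ Cols, ∃ x y, (x, y, s) ∈ C) ∧
  (∀ x y, G.Adj x y → ∃! s, (x, y, s) ∈ C) ∧
  (∀ x y s x' y', (x, y, s) ∈ C → (x', y', s) ∈ C →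
    ¬((x = x' ∧ y = y') ∨ (x = y' ∧ y = x')) →
    x ≠ x' ∧ x ≠ y' ∧ y ≠ x' ∧ y ≠ y' ∧
    ¬G.Adj x x' ∧ ¬G.Adj x y' ∧ ¬G.Adj y x' ∧ ¬G.Adj y y')

/-- A graph is bipartite when its vertex set splits into two parts with all
edges between the parts. -/
def IsBipartiteSG {V : Type*} (G : SimpleGraph V) : Prop :=
  ∃ A : Set V, ∀ x y, G.Adj x y → ((x ∈ A ∧ y ∉ A) ∨ (x ∉ A ∧ y ∈ A))

/-- The tensor product of a family of graphs: vertices are tuples, and two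
tuples are adjacent when they are adjacent in every coordinate. -/
def tensorProd {ι : Type*} [Nonempty ι] {V : ι → Type*}
    (G : ∀ i, SimpleGraph (V i)) : SimpleGraph (∀ i, V i) where
  Adj x y := ∀ i, (G i).Adj (x i) (y i)
  symm := ⟨by intro x y h i; exact (h i).symm⟩
  loopless := ⟨by intro x h; exact (G (Classical.arbitrary ι)).irrefl (h _)⟩

/-!
Bipartiteness lifts from any one factor through the projection onto it. For the coloring,
two product edges of the same color are compared coordinatewise: if in some coordinate they
are different edges, the strong coloring of that factor separates them; otherwise every
coordinate is the same edge, traversed in the same or in the opposite direction, and when the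
product edges differ both directions occur, which separates them as well.
-/

open Set

section

variable {ι : Type*} {V : ι → Type*} {S : ι → Type*}

namespace SimpleGraph

def EdgesSeparated {W : Type*} (G : SimpleGraph W) (x y x' y' : W) : Prop :=
  x ≠ x' ∧ x ≠ y' ∧ y ≠ x' ∧ y ≠ y' ∧
    ¬G.Adj x x' ∧ ¬G.Adj x y' ∧ ¬G.Adj y x' ∧ ¬G.Adj y y'

variable [Nonempty ι] {G : ∀ i, SimpleGraph (V i)} {x y x' y' : ∀ i, V i}

theorem edgesSeparated_tensorProd_of_apply (i : ι)
    (h : (G i).EdgesSeparated (x i) (y i) (x' i) (y' i)) :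
    (tensorProd G).EdgesSeparated x y x' y' :=
  ⟨fun he => h.1 (congrFun he i), fun he => h.2.1 (congrFun he i),
    fun he => h.2.2.1 (congrFun he i), fun he => h.2.2.2.1 (congrFun he i),
    fun ha => h.2.2.2.2.1 (ha i), fun ha => h.2.2.2.2.2.1 (ha i),
    fun ha => h.2.2.2.2.2.2.1 (ha i), fun ha => h.2.2.2.2.2.2.2 (ha i)⟩

/-- A flipped coordinate `j` separates `x` from `x'` and `y` from `y'`, an aligned coordinate
`k` separates `x` from `y'` and `y` from `x'`; the adjacencies die on looplessness. -/
theorem edgesSeparated_tensorProd_of_flip_of_aligned {j k : ι}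
    (hj : x j = y' j ∧ y j = x' j) (hk : x k = x' k ∧ y k = y' k)
    (hj' : x' j ≠ y' j) (hk' : x' k ≠ y' k) :
    (tensorProd G).EdgesSeparated x y x' y' :=
  ⟨fun he => hj' ((congrFun he j).symm.trans hj.1),
    fun he => hk' (hk.1.symm.trans (congrFun he k)),
    fun he => hk' ((congrFun he k).symm.trans hk.2),
    fun he => hj' (hj.2.symm.trans (congrFun he j)),
    fun ha => (G k).irrefl (hk.1 ▸ ha k), fun ha => (G j).irrefl (hj.1 ▸ ha j),
    fun ha => (G j).irrefl (hj.2 ▸ ha j), fun ha => (G k).irrefl (hk.2 ▸ ha k)⟩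

end SimpleGraph

theorem exists_flip_and_exists_aligned_of_forall {x y x' y' : ∀ i, V i}
    (hall : ∀ i, (x i = x' i ∧ y i = y' i) ∨ (x i = y' i ∧ y i = x' i))
    (hne : ¬((x = x' ∧ y = y') ∨ (x = y' ∧ y = x'))) :
    (∃ j, x j = y' j ∧ y j = x' j) ∧ ∃ k, x k = x' k ∧ y k = y' k := by
  constructor
  · by_contra hflip
    have aligned i := (hall i).resolve_right (not_exists.mp hflip i)
    exact hne (.inl ⟨funext fun i => (aligned i).1, funext fun i => (aligned i).2⟩)
  · by_contra haligned
    have flipped i := (hall i).resolve_left (not_exists.mp haligned i)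
    exact hne (.inr ⟨funext fun i => (flipped i).1, funext fun i => (flipped i).2⟩)

theorem IsBipartiteSG.tensorProd [Nonempty ι] {G : ∀ i, SimpleGraph (V i)} {i : ι}
    (h : IsBipartiteSG (G i)) : IsBipartiteSG (tensorProd G) :=
  let ⟨A, hA⟩ := h
  ⟨{x | x i ∈ A}, fun _ _ hxy => hA _ _ (hxy i)⟩

def piColoring (C : ∀ i, Set (V i × V i × S i)) :
    Set ((∀ i, V i) × (∀ i, V i) × (∀ i, S i)) :=
  {t | ∀ i, (t.1 i, t.2.1 i, t.2.2 i) ∈ C i}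

theorem IsStrongEdgeColoringSGOn.tensorProd [Nonempty ι] {G : ∀ i, SimpleGraph (V i)}
    {Cols : ∀ i, Set (S i)} {C : ∀ i, Set (V i × V i × S i)}
    (hC : ∀ i, IsStrongEdgeColoringSGOn (G i) (Cols i) (C i)) :
    IsStrongEdgeColoringSGOn (tensorProd G) (univ.pi Cols) (piColoring C) := by
  refine ⟨fun x y s h => ?_, fun x y s h i => (hC i).2.1 _ _ _ (h i), fun s hs => ?_,
    fun x y hxy => ?_, fun x y s x' y' h h' hne => ?_⟩
  · exact ⟨fun i => ((hC i).1 _ _ _ (h i)).1, fun i _ => ((hC i).1 _ _ _ (h i)).2⟩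
  · choose x y hxy using fun i => (hC i).2.2.1 (s i) (hs i trivial)
    exact ⟨x, y, hxy⟩
  · choose s hs huniq using fun i => (hC i).2.2.2.1 _ _ (hxy i)
    exact ⟨s, hs, fun s' hs' => funext fun i => huniq i _ (hs' i)⟩
  · by_cases hall : ∀ i, (x i = x' i ∧ y i = y' i) ∨ (x i = y' i ∧ y i = x' i)
    · obtain ⟨⟨j, hj⟩, ⟨k, hk⟩⟩ := exists_flip_and_exists_aligned_of_forall hall hne
      have hx'y' i : x' i ≠ y' i := ((hC i).1 _ _ _ (h' i)).1.ne
      exact SimpleGraph.edgesSeparated_tensorProd_of_flip_of_aligned hj hk (hx'y' j) (hx'y' k)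
    · obtain ⟨i, hi⟩ := not_forall.mp hall
      exact SimpleGraph.edgesSeparated_tensorProd_of_apply i
        ((hC i).2.2.2.2 _ _ _ _ _ (h i) (h' i) hi)

end

/-- If `Γ_i`, `1 ≤ i ≤ l`, are graphs, at least one of which is bipartite, each
with a strong edge coloring `C i` using colors from `S i`, then the tensor
product is bipartite and the product coloring is a strong edge coloring of it
with colors from `∏ S i`. -/
theorem tensorProd_strongEdgeColoring {ι : Type*} [Nonempty ι]
    {V : ι → Type*} {S : ι → Type*}
    (G : ∀ i, SimpleGraph (V i)) (C : ∀ i, Set (V i × V i × S i))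
    (hC : ∀ i, IsStrongEdgeColoringSGOn (G i) Set.univ (C i))
    (hbip : ∃ i, IsBipartiteSG (G i)) :
    IsBipartiteSG (tensorProd G) ∧
      IsStrongEdgeColoringSGOn (tensorProd G) Set.univ
        {t : (∀ i, V i) × (∀ i, V i) × (∀ i, S i) |
          ∀ i, (t.1 i, t.2.1 i, t.2.2 i) ∈ C i} := by
  obtain ⟨i, hi⟩ := hbip
  exact ⟨hi.tensorProd, pi_univ univ ▸ IsStrongEdgeColoringSGOn.tensorProd hC⟩
end

section
/- Suppose there exist placement delivery arrays P_i with parameters (K_i, F_i, Z_i, S_i) for 1 ≤ i ≤ l, where Z_i = F_i − g_i. Then there exists a placement delivery array with parameters (K, F, Z, S) where K = ∏K_i, F = ∏F_i, Z = ∏F_i − ∏g_i, and S = ∏S_i. -/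
/-!
Rows and columns of the product of two arrays are indexed by pairs, and the entry at rows
`(j₁, j₂)`, columns `(k₁, k₂)` is the pair of symbols `(s₁, s₂)` when both factor entries are
integers `s₁, s₂`, and `*` otherwise. A column then has `g₁ g₂` integer entries. For condition (C),
suppose the symbol `(s₁, s₂)` appears at two positions in distinct rows and columns. If the rows
agree in the first coordinate, then so do the columns (by (B) for `P₁`), and (C) for `P₂` produces
the stars; otherwise the columns differ in the first coordinate too, and (C) for `P₁` produces
them.
-/

/-- Encodes `(a, b) ∈ [1, m] × [1, n]` bijectively as an element of `[1, m n]`. -/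
def pairSymbol (n a b : ℕ) : ℕ := (a - 1) * n + b

section pairSymbol

variable {m n a b : ℕ}

lemma pairSymbol_mem_Icc (ha : a ∈ Set.Icc 1 m) (hb : b ∈ Set.Icc 1 n) :
    pairSymbol n a b ∈ Set.Icc 1 (m * n) := by
  obtain ⟨a, rfl⟩ := Nat.exists_eq_add_of_le' ha.1
  obtain ⟨hb₁, hb₂⟩ := hb
  refine ⟨by unfold pairSymbol; omega, ?_⟩
  calc a * n + b ≤ (a + 1) * n := by nlinarith
    _ ≤ m * n := Nat.mul_le_mul_right n ha.2

lemma pairSymbol_div_mod (hb : b ∈ Set.Icc 1 n) :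
    (pairSymbol n a b - 1) / n = a - 1 ∧ (pairSymbol n a b - 1) % n = b - 1 := by
  obtain ⟨hb₁, hb₂⟩ := hb
  refine (Nat.div_mod_unique (by omega)).2 ⟨?_, by omega⟩
  unfold pairSymbol
  rw [mul_comm]
  omega

lemma pairSymbol_inj {a' b' : ℕ} (ha : 1 ≤ a) (ha' : 1 ≤ a') (hb : b ∈ Set.Icc 1 n)
    (hb' : b' ∈ Set.Icc 1 n) (h : pairSymbol n a b = pairSymbol n a' b') : a = a' ∧ b = b' := by
  obtain ⟨hdiv, hmod⟩ := pairSymbol_div_mod (a := a) hb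
  obtain ⟨hdiv', hmod'⟩ := pairSymbol_div_mod (a := a') hb'
  rw [h] at hdiv hmod
  have := hb.1; have := hb'.1
  omega

lemma exists_pairSymbol_eq {s : ℕ} (hs : s ∈ Set.Icc 1 (m * n)) :
    ∃ a ∈ Set.Icc 1 m, ∃ b ∈ Set.Icc 1 n, pairSymbol n a b = s := by
  obtain ⟨hs₁, hs₂⟩ := hs
  have hn : 0 < n := Nat.pos_of_ne_zero fun h => by simp [h] at hs₂; omega
  have hdiv : (s - 1) / n < m := (Nat.div_lt_iff_lt_mul hn).2 (by omega)
  refine ⟨(s - 1) / n + 1, ⟨Nat.le_add_left 1 _, hdiv⟩,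
    (s - 1) % n + 1, ⟨Nat.le_add_left 1 _, Nat.mod_lt _ hn⟩, ?_⟩
  unfold pairSymbol
  have := Nat.div_add_mod' (s - 1) n
  rw [Nat.add_sub_cancel]
  omega

end pairSymbol

lemma IsPDA.card_filter_ne_none {K F Z S : ℕ} {P : Fin F → Fin K → Option ℕ}
    (h : IsPDA K F Z S P) (k : Fin K) :
    (Finset.univ.filter fun j => P j k ≠ none).card = F - Z := by
  have := Finset.card_filter_add_card_filter_not (s := Finset.univ) fun j => P j k = none
  rw [h.2.2.1 k, Finset.card_univ, Fintype.card_fin] at this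
  simp only [ne_eq]
  omega

def pdaProduct {K₁ F₁ K₂ F₂ : ℕ} (S₂ : ℕ) (P₁ : Fin F₁ → Fin K₁ → Option ℕ)
    (P₂ : Fin F₂ → Fin K₂ → Option ℕ) : Fin (F₁ * F₂) → Fin (K₁ * K₂) → Option ℕ :=
  fun j k =>
    Option.map₂ (pairSymbol S₂) (P₁ (finProdFinEquiv.symm j).1 (finProdFinEquiv.symm k).1)
      (P₂ (finProdFinEquiv.symm j).2 (finProdFinEquiv.symm k).2)

@[simp]
lemma pdaProduct_apply {K₁ F₁ K₂ F₂ S₂ : ℕ} {P₁ : Fin F₁ → Fin K₁ → Option ℕ}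
    {P₂ : Fin F₂ → Fin K₂ → Option ℕ} (j₁ : Fin F₁) (j₂ : Fin F₂) (k₁ : Fin K₁) (k₂ : Fin K₂) :
    pdaProduct S₂ P₁ P₂ (finProdFinEquiv (j₁, j₂)) (finProdFinEquiv (k₁, k₂)) =
      Option.map₂ (pairSymbol S₂) (P₁ j₁ k₁) (P₂ j₂ k₂) := by
  simp [pdaProduct]

namespace IsPDA

variable {K₁ F₁ Z₁ S₁ K₂ F₂ Z₂ S₂ : ℕ}
  {P₁ : Fin F₁ → Fin K₁ → Option ℕ} {P₂ : Fin F₂ → Fin K₂ → Option ℕ}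
  (h₁ : IsPDA K₁ F₁ Z₁ S₁ P₁) (h₂ : IsPDA K₂ F₂ Z₂ S₂ P₂)
include h₁ h₂

lemma product_symbol_mem {j k s} (hs : pdaProduct S₂ P₁ P₂ j k = some s) :
    s ∈ Set.Icc 1 (S₁ * S₂) := by
  obtain ⟨⟨j₁, j₂⟩, rfl⟩ := finProdFinEquiv.surjective j
  obtain ⟨⟨k₁, k₂⟩, rfl⟩ := finProdFinEquiv.surjective k
  simp only [pdaProduct_apply, Option.map₂_eq_some_iff, Option.mem_def] at hs
  obtain ⟨s₁, s₂, hs₁, hs₂, rfl⟩ := hs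
  exact pairSymbol_mem_Icc (h₁.1 _ _ _ hs₁) (h₂.1 _ _ _ hs₂)

lemma product_symbol_exists {s} (hs : s ∈ Set.Icc 1 (S₁ * S₂)) :
    ∃ j k, pdaProduct S₂ P₁ P₂ j k = some s := by
  obtain ⟨s₁, hs₁, s₂, hs₂, rfl⟩ := exists_pairSymbol_eq hs
  obtain ⟨j₁, k₁, hjk₁⟩ := h₁.2.1 s₁ hs₁.1 hs₁.2
  obtain ⟨j₂, k₂, hjk₂⟩ := h₂.2.1 s₂ hs₂.1 hs₂.2
  exact ⟨finProdFinEquiv (j₁, j₂), finProdFinEquiv (k₁, k₂), by simp [hjk₁, hjk₂]⟩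

lemma product_card_filter_eq_none (k) :
    (Finset.univ.filter fun j => pdaProduct S₂ P₁ P₂ j k = none).card =
      F₁ * F₂ - (F₁ - Z₁) * (F₂ - Z₂) := by
  obtain ⟨⟨k₁, k₂⟩, rfl⟩ := finProdFinEquiv.surjective k
  have hsome : (Finset.univ.filter fun j => pdaProduct S₂ P₁ P₂ j (finProdFinEquiv (k₁, k₂)) ≠ none)
      = Finset.map finProdFinEquiv.toEmbedding
          ((Finset.univ.filter fun j₁ => P₁ j₁ k₁ ≠ none) ×ˢ
            (Finset.univ.filter fun j₂ => P₂ j₂ k₂ ≠ none)) := by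
    ext j
    obtain ⟨⟨j₁, j₂⟩, rfl⟩ := finProdFinEquiv.surjective j
    simp [Option.map₂_eq_none_iff]
  have := Finset.card_filter_add_card_filter_not (s := Finset.univ)
    fun j => pdaProduct S₂ P₁ P₂ j (finProdFinEquiv (k₁, k₂)) = none
  simp only [← ne_eq, hsome, Finset.card_map, Finset.card_product, h₁.card_filter_ne_none,
    h₂.card_filter_ne_none, Finset.card_univ, Fintype.card_fin] at this
  omega

lemma factor_eq_some_of_product_eq_some {j₁ j₁' : Fin F₁} {j₂ j₂' : Fin F₂} {k₁ k₁' : Fin K₁}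
    {k₂ k₂' : Fin K₂} {s}
    (hs : pdaProduct S₂ P₁ P₂ (finProdFinEquiv (j₁, j₂)) (finProdFinEquiv (k₁, k₂)) = some s)
    (hs' : pdaProduct S₂ P₁ P₂ (finProdFinEquiv (j₁', j₂')) (finProdFinEquiv (k₁', k₂')) = some s) :
    ∃ s₁ s₂, P₁ j₁ k₁ = some s₁ ∧ P₁ j₁' k₁' = some s₁ ∧
      P₂ j₂ k₂ = some s₂ ∧ P₂ j₂' k₂' = some s₂ := by
  simp only [pdaProduct_apply, Option.map₂_eq_some_iff, Option.mem_def] at hs hs'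
  obtain ⟨s₁, s₂, hs₁, hs₂, rfl⟩ := hs
  obtain ⟨s₁', s₂', hs₁', hs₂', hs⟩ := hs'
  obtain ⟨rfl, rfl⟩ := pairSymbol_inj (h₁.1 _ _ _ hs₁').1 (h₁.1 _ _ _ hs₁).1
    (h₂.1 _ _ _ hs₂') (h₂.1 _ _ _ hs₂) hs
  exact ⟨s₁', s₂', hs₁, hs₁', hs₂, hs₂'⟩

lemma product_row_unique {j k k' s} (hs : pdaProduct S₂ P₁ P₂ j k = some s)
    (hs' : pdaProduct S₂ P₁ P₂ j k' = some s) : k = k' := by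
  obtain ⟨⟨j₁, j₂⟩, rfl⟩ := finProdFinEquiv.surjective j
  obtain ⟨⟨k₁, k₂⟩, rfl⟩ := finProdFinEquiv.surjective k
  obtain ⟨⟨k₁', k₂'⟩, rfl⟩ := finProdFinEquiv.surjective k'
  obtain ⟨s₁, s₂, hs₁, hs₁', hs₂, hs₂'⟩ := factor_eq_some_of_product_eq_some h₁ h₂ hs hs'
  rw [h₁.2.2.2.1 _ _ _ _ hs₁ hs₁', h₂.2.2.2.1 _ _ _ _ hs₂ hs₂']

lemma product_column_unique {j j' k s} (hs : pdaProduct S₂ P₁ P₂ j k = some s)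
    (hs' : pdaProduct S₂ P₁ P₂ j' k = some s) : j = j' := by
  obtain ⟨⟨j₁, j₂⟩, rfl⟩ := finProdFinEquiv.surjective j
  obtain ⟨⟨j₁', j₂'⟩, rfl⟩ := finProdFinEquiv.surjective j'
  obtain ⟨⟨k₁, k₂⟩, rfl⟩ := finProdFinEquiv.surjective k
  obtain ⟨s₁, s₂, hs₁, hs₁', hs₂, hs₂'⟩ := factor_eq_some_of_product_eq_some h₁ h₂ hs hs'
  rw [h₁.2.2.2.2.1 _ _ _ _ hs₁ hs₁', h₂.2.2.2.2.1 _ _ _ _ hs₂ hs₂']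

lemma product_eq_none_of_eq_some {j j' k k' s} (hj : j ≠ j') (hk : k ≠ k')
    (hs : pdaProduct S₂ P₁ P₂ j k = some s) (hs' : pdaProduct S₂ P₁ P₂ j' k' = some s) :
    pdaProduct S₂ P₁ P₂ j k' = none ∧ pdaProduct S₂ P₁ P₂ j' k = none := by
  obtain ⟨⟨j₁, j₂⟩, rfl⟩ := finProdFinEquiv.surjective j
  obtain ⟨⟨j₁', j₂'⟩, rfl⟩ := finProdFinEquiv.surjective j'
  obtain ⟨⟨k₁, k₂⟩, rfl⟩ := finProdFinEquiv.surjective k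
  obtain ⟨⟨k₁', k₂'⟩, rfl⟩ := finProdFinEquiv.surjective k'
  obtain ⟨s₁, s₂, hs₁, hs₁', hs₂, hs₂'⟩ := factor_eq_some_of_product_eq_some h₁ h₂ hs hs'
  simp only [ne_eq, EmbeddingLike.apply_eq_iff_eq, Prod.mk.injEq, not_and] at hj hk
  simp only [pdaProduct_apply, Option.map₂_eq_none_iff]
  by_cases hj₁ : j₁ = j₁'
  · subst hj₁
    have hk₁ := h₁.2.2.2.1 _ _ _ _ hs₁ hs₁'
    have := h₂.2.2.2.2.2 _ _ _ _ _ (hj rfl) (hk hk₁) hs₂ hs₂'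
    exact ⟨.inr this.1, .inr this.2⟩
  · have hk₁ : k₁ ≠ k₁' := by
      rintro rfl
      exact hj₁ (h₁.2.2.2.2.1 _ _ _ _ hs₁ hs₁')
    have := h₁.2.2.2.2.2 _ _ _ _ _ hj₁ hk₁ hs₁ hs₁'
    exact ⟨.inl this.1, .inl this.2⟩

theorem product :
    IsPDA (K₁ * K₂) (F₁ * F₂) (F₁ * F₂ - (F₁ - Z₁) * (F₂ - Z₂)) (S₁ * S₂)
      (pdaProduct S₂ P₁ P₂) :=
  ⟨fun _ _ _ => product_symbol_mem h₁ h₂,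
    fun _ hs hs' => product_symbol_exists h₁ h₂ ⟨hs, hs'⟩,
    product_card_filter_eq_none h₁ h₂,
    fun _ _ _ _ => product_row_unique h₁ h₂,
    fun _ _ _ _ => product_column_unique h₁ h₂,
    fun _ _ _ _ _ => product_eq_none_of_eq_some h₁ h₂⟩

end IsPDA

lemma isPDA_one : IsPDA 1 1 0 1 fun _ _ => some 1 := by
  refine ⟨fun _ _ _ h => ?_, fun s h h' => ⟨0, 0, by rw [show s = 1 by omega]⟩, fun _ => rfl,
    fun _ _ _ _ _ _ => Subsingleton.elim _ _, fun _ _ _ _ _ _ => Subsingleton.elim _ _,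
    fun _ _ _ _ _ hj => absurd (Subsingleton.elim _ _) hj⟩
  cases h
  simp

/-- If there exist `(K_i, F_i, Z_i, S_i)`-PDAs with `Z_i = F_i - g_i` for
`1 ≤ i ≤ l`, then there exists a `(∏ K_i, ∏ F_i, ∏ F_i - ∏ g_i, ∏ S_i)`-PDA. -/
theorem pda_product {l : ℕ} (K F Z S g : Fin l → ℕ)
    (hg : ∀ i, g i ≤ F i) (hZ : ∀ i, Z i = F i - g i)
    (hP : ∀ i, ∃ P : Fin (F i) → Fin (K i) → Option ℕ,
      IsPDA (K i) (F i) (Z i) (S i) P) :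
    ∃ P : Fin (∏ i, F i) → Fin (∏ i, K i) → Option ℕ,
      IsPDA (∏ i, K i) (∏ i, F i) ((∏ i, F i) - ∏ i, g i) (∏ i, S i) P := by
  induction l with
  | zero => simpa only [Fin.prod_univ_zero, Nat.sub_self] using ⟨_, isPDA_one⟩
  | succ n ih =>
    obtain ⟨P₀, h₀⟩ := hP 0
    obtain ⟨P', h'⟩ := ih (fun i => K i.succ) (fun i => F i.succ) (fun i => Z i.succ)
      (fun i => S i.succ) (fun i => g i.succ) (fun i => hg i.succ) (fun i => hZ i.succ)
      (fun i => hP i.succ)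
    have hg' : ∏ i : Fin n, g i.succ ≤ ∏ i : Fin n, F i.succ :=
      Finset.prod_le_prod' fun i _ => hg i.succ
    have h := h₀.product h'
    rw [hZ 0, Nat.sub_sub_self (hg 0), Nat.sub_sub_self hg'] at h
    rw [Fin.prod_univ_succ K, Fin.prod_univ_succ F, Fin.prod_univ_succ S, Fin.prod_univ_succ g]
    exact ⟨_, h⟩
end

section
/- Let Γ1=(V1,E1) be a graph with strong edge coloring E1, proper vertex coloring V with color set S' and two opposing orientations E°, E∘ of E1 with mutually disjoint color sets S°, S∘ (both disjoint from S'). Let Γ2=(V2,W2,E2) be a bipartite graph with strong edge coloring E2 using colors from S2. Define Γ1:Γ2 to be the bipartite graph with parts V1×V2 and V1×W2 and edges {((x,y),(u,v)) : (y,v)∈E2, and (x=u or {x,u}∈E1)}. Then E = {((x,y),(u,v),(s,s2)) : (y,v,s2)∈E2, and either x=u with (x,s)∈V, or (⟨x,u⟩,s)∈E°∪E∘} is a strong edge coloring of Γ1:Γ2 with colors from (S'∪S°∪S∘)×S2. -/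
/-- A proper vertex coloring of `G` with colors from `Cols`, as a set of pairs:
every vertex gets exactly one color, every color is used, and adjacent vertices
get different colors. -/
def IsProperVertexColoringOn {V T : Type*} (G : SimpleGraph V) (Cols : Set T)
    (Vc : Set (V × T)) : Prop :=
  (∀ x s, (x, s) ∈ Vc → s ∈ Cols) ∧
  (∀ s ∈ Cols, ∃ x, (x, s) ∈ Vc) ∧
  (∀ x, ∃! s, (x, s) ∈ Vc) ∧
  (∀ x y s, G.Adj x y → (x, s) ∈ Vc → (y, s) ∉ Vc)

/-- Strong-like product lemma: from a strong edge coloring `C1` of `Γ1` (with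
colors from `S1`), a proper vertex coloring `Vc` of `Γ1` (with colors from
`SV`), and two opposing orientations of `C1` — an orientation `O ⊆ C1`
relabeled by the injections `φc`, `φo` into the mutually disjoint color sets
`φc '' S1`, `φo '' S1`, both disjoint from `SV` — together with a strong edge
coloring `C2` of bipartite `Γ2 = (V2, W2, E2)` with colors from `S2`, one
obtains a strong edge coloring of `Γ1 : Γ2` (parts `V1 × V2` and `V1 × W2`,
edges `((x,y),(u,v))` with `(y,v) ∈ E2` and `x = u` or `x ∼ u`) with colors
from `(SV ∪ φc '' S1 ∪ φo '' S1) × S2`: an edge `((x,y),(u,v))` is colored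
`(s,s2)` where `(y,v,s2) ∈ C2`, and either `x = u` with vertex color `s`, or
`(⟨x,u⟩,s)` belongs to one of the two oriented colorings. -/
theorem strongLikeProduct_strongEdgeColoring {V1 V2 W2 T S2T : Type*}
    (G1 : SimpleGraph V1) (S1 SV : Set T)
    (C1 : Set (V1 × V1 × T)) (h1 : IsStrongEdgeColoringSGOn G1 S1 C1)
    (Vc : Set (V1 × T)) (hVc : IsProperVertexColoringOn G1 SV Vc)
    (O : Set (V1 × V1 × T))
    (hO1 : O ⊆ C1)
    (hO2 : ∀ x y s, (x, y, s) ∈ C1 → ((x, y, s) ∈ O ↔ (y, x, s) ∉ O))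
    (φc φo : T → T) (hφc : Function.Injective φc) (hφo : Function.Injective φo)
    (hdisj1 : Disjoint (φc '' S1) (φo '' S1))
    (hdisj2 : Disjoint (φc '' S1) SV)
    (hdisj3 : Disjoint (φo '' S1) SV)
    (E2 : Set (V2 × W2)) (S2 : Set S2T) (C2 : Set (V2 × W2 × S2T))
    (h2 : IsStrongEdgeColoringOn E2 S2 C2) :
    IsStrongEdgeColoringOn
      {p : (V1 × V2) × (V1 × W2) |
        (p.1.2, p.2.2) ∈ E2 ∧ (p.1.1 = p.2.1 ∨ G1.Adj p.1.1 p.2.1)}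
      {c : T × S2T | c.1 ∈ SV ∪ φc '' S1 ∪ φo '' S1 ∧ c.2 ∈ S2}
      {t : (V1 × V2) × (V1 × W2) × (T × S2T) |
        (t.1.2, t.2.1.2, t.2.2.2) ∈ C2 ∧
        ((t.1.1 = t.2.1.1 ∧ (t.1.1, t.2.2.1) ∈ Vc) ∨
          (∃ s, (t.1.1, t.2.1.1, s) ∈ O ∧ t.2.2.1 = φc s) ∨
          (∃ s, (t.2.1.1, t.1.1, s) ∈ O ∧ t.2.2.1 = φo s))} := by

  obtain ⟨h1a, h1sym, h1used, h1uniq, h1strong⟩ := h1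
  obtain ⟨hVa, hVused, hVuniq, hVprop⟩ := hVc
  obtain ⟨h2a, h2used, h2uniq, h2strong⟩ := h2
  refine ⟨?_, ?_, ?_, ?_⟩
  · -- membership
    rintro ⟨x, y⟩ ⟨u, v⟩ ⟨s, s2⟩ ⟨hc2, hcase⟩
    obtain ⟨hE2, hS2⟩ := h2a y v s2 hc2
    refine ⟨⟨hE2, ?_⟩, ?_, hS2⟩
    · rcases hcase with ⟨hxu, _⟩ | ⟨t, hO, _⟩ | ⟨t, hO, _⟩
      · exact Or.inl hxu
      · exact Or.inr (h1a x u t (hO1 hO)).1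
      · exact Or.inr ((h1a u x t (hO1 hO)).1.symm)
    · rcases hcase with ⟨_, hvc⟩ | ⟨t, hO, hs⟩ | ⟨t, hO, hs⟩
      · exact Or.inl (Or.inl (hVa x s hvc))
      · exact Or.inl (Or.inr ⟨t, (h1a x u t (hO1 hO)).2, hs.symm⟩)
      · exact Or.inr ⟨t, (h1a u x t (hO1 hO)).2, hs.symm⟩
  · -- every color used
    rintro ⟨s, s2⟩ ⟨hs, hs2⟩
    obtain ⟨y, v, hc2⟩ := h2used s2 hs2
    rcases hs with (hsV | ⟨t, ht1, rfl⟩) | ⟨t, ht1, rfl⟩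
    · obtain ⟨x, hx⟩ := hVused s hsV
      exact ⟨(x, y), (x, v), hc2, Or.inl ⟨rfl, hx⟩⟩
    · obtain ⟨a, b, hab⟩ := h1used t ht1
      by_cases hO : (a, b, t) ∈ O
      · exact ⟨(a, y), (b, v), hc2, Or.inr (Or.inl ⟨t, hO, rfl⟩)⟩
      · have hba : (b, a, t) ∈ O := not_not.mp (fun hn => hO ((hO2 a b t hab).mpr hn))
        exact ⟨(b, y), (a, v), hc2, Or.inr (Or.inl ⟨t, hba, rfl⟩)⟩
    · obtain ⟨a, b, hab⟩ := h1used t ht1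
      by_cases hO : (a, b, t) ∈ O
      · exact ⟨(b, y), (a, v), hc2, Or.inr (Or.inr ⟨t, hO, rfl⟩)⟩
      · have hba : (b, a, t) ∈ O := not_not.mp (fun hn => hO ((hO2 a b t hab).mpr hn))
        exact ⟨(a, y), (b, v), hc2, Or.inr (Or.inr ⟨t, hba, rfl⟩)⟩
  · -- unique color per edge
    rintro ⟨x, y⟩ ⟨u, v⟩ ⟨he2, hor⟩
    dsimp only at he2 hor
    obtain ⟨s2, hs2, hs2u⟩ := h2uniq y v he2
    rcases hor with rfl | hadj
    · obtain ⟨s, hsV, hsu⟩ := hVuniq x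
      refine ⟨(s, s2), ⟨hs2, Or.inl ⟨rfl, hsV⟩⟩, ?_⟩
      rintro ⟨s', s2'⟩ ⟨hc2', hcase'⟩
      have hs2' : s2' = s2 := hs2u s2' hc2'
      rcases hcase' with ⟨_, hvc⟩ | ⟨t, hO, _⟩ | ⟨t, hO, _⟩
      · rw [hs2', hsu s' hvc]
      · exact absurd (h1a x x t (hO1 hO)).1 (G1.irrefl)
      · exact absurd (h1a x x t (hO1 hO)).1 (G1.irrefl)
    · have hxu : x ≠ u := G1.ne_of_adj hadj
      obtain ⟨t, ht, htu⟩ := h1uniq x u hadj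
      by_cases hOt : (x, u, t) ∈ O
      · refine ⟨(φc t, s2), ⟨hs2, Or.inr (Or.inl ⟨t, hOt, rfl⟩)⟩, ?_⟩
        rintro ⟨s', s2'⟩ ⟨hc2', hcase'⟩
        have hs2' : s2' = s2 := hs2u s2' hc2'
        rcases hcase' with ⟨hxu', _⟩ | ⟨t', hO', rfl⟩ | ⟨t', hO', rfl⟩
        · exact absurd hxu' hxu
        · rw [hs2', htu t' (hO1 hO')]
        · have ht' : t' = t := htu t' (h1sym u x t' (hO1 hO'))
          rw [ht'] at hO'
          exact absurd hO' ((hO2 x u t ht).mp hOt)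
      · have hOt' : (u, x, t) ∈ O := not_not.mp (fun hn => hOt ((hO2 x u t ht).mpr hn))
        refine ⟨(φo t, s2), ⟨hs2, Or.inr (Or.inr ⟨t, hOt', rfl⟩)⟩, ?_⟩
        rintro ⟨s', s2'⟩ ⟨hc2', hcase'⟩
        have hs2' : s2' = s2 := hs2u s2' hc2'
        rcases hcase' with ⟨hxu', _⟩ | ⟨t', hO', rfl⟩ | ⟨t', hO', rfl⟩
        · exact absurd hxu' hxu
        · have ht' : t' = t := htu t' (hO1 hO')
          rw [ht'] at hO'
          exact absurd hO' hOt
        · rw [hs2', htu t' (h1sym u x t' (hO1 hO'))]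
  · -- strong condition
    rintro ⟨x, y⟩ ⟨u, v⟩ ⟨s, s2⟩ ⟨x', y'⟩ ⟨u', v'⟩ ⟨hc2, hcase⟩ ⟨hc2', hcase'⟩ hne
    dsimp only at hc2 hcase hc2' hcase'
    -- helper: if the V1-parts coincide, use the C2 strong condition
    have hKey : x = x' → u = u' →
        y ≠ y' ∧ v ≠ v' ∧ (y, v') ∉ E2 ∧ (y', v) ∉ E2 := by
      intro hx hu
      have hne2 : (y, v) ≠ (y', v') := by
        intro h
        injection h with hy hv
        exact hne (by rw [hx, hu, hy, hv])
      exact h2strong y v s2 y' v' hc2 hc2' hne2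
    have hEq : ∀ (hx : x = x') (hu : u = u'),
        ((x, y) ≠ (x', y') ∧ (u, v) ≠ (u', v') ∧
          ((x, y), (u', v')) ∉ {p : (V1 × V2) × (V1 × W2) |
            (p.1.2, p.2.2) ∈ E2 ∧ (p.1.1 = p.2.1 ∨ G1.Adj p.1.1 p.2.1)} ∧
          ((x', y'), (u, v)) ∉ {p : (V1 × V2) × (V1 × W2) |
            (p.1.2, p.2.2) ∈ E2 ∧ (p.1.1 = p.2.1 ∨ G1.Adj p.1.1 p.2.1)}) := by
      intro hx hu
      obtain ⟨hy, hv, hE1, hE2'⟩ := hKey hx hu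
      refine ⟨fun h => hy (Prod.ext_iff.mp h).2, fun h => hv (Prod.ext_iff.mp h).2,
        fun h => hE1 h.1, fun h => hE2' h.1⟩
    have hNeq : x ≠ x' → u ≠ u' → x ≠ u' → ¬G1.Adj x u' → x' ≠ u → ¬G1.Adj x' u →
        ((x, y) ≠ (x', y') ∧ (u, v) ≠ (u', v') ∧
          ((x, y), (u', v')) ∉ {p : (V1 × V2) × (V1 × W2) |
            (p.1.2, p.2.2) ∈ E2 ∧ (p.1.1 = p.2.1 ∨ G1.Adj p.1.1 p.2.1)} ∧
          ((x', y'), (u, v)) ∉ {p : (V1 × V2) × (V1 × W2) |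
            (p.1.2, p.2.2) ∈ E2 ∧ (p.1.1 = p.2.1 ∨ G1.Adj p.1.1 p.2.1)}) := by
      intro hxx huu hxu' haxu' hx'u hax'u
      refine ⟨fun h => hxx (Prod.ext_iff.mp h).1, fun h => huu (Prod.ext_iff.mp h).1,
        fun h => ?_, fun h => ?_⟩
      · rcases h.2 with h' | h'
        · exact hxu' h'
        · exact haxu' h'
      · rcases h.2 with h' | h'
        · exact hx'u h'
        · exact hax'u h'
    rcases hcase with ⟨hxu, hvc⟩ | ⟨t, hO, hs⟩ | ⟨t, hO, hs⟩ <;>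
      rcases hcase' with ⟨hxu', hvc'⟩ | ⟨t', hO', hs'⟩ | ⟨t', hO', hs'⟩
    · -- A, A
      by_cases hxx : x = x'
      · exact hEq hxx (hxu.symm.trans (hxx.trans hxu'))
      · have hnadj : ¬G1.Adj x x' := fun h => hVprop x x' s h hvc hvc'
        refine hNeq hxx (fun h => hxx (hxu.trans (h.trans hxu'.symm)))
          (fun h => hxx (h.trans hxu'.symm)) (fun h => hnadj (by rwa [← hxu'] at h))
          (fun h => hxx (hxu.trans h.symm)) (fun h => hnadj (by rw [hxu]; exact h.symm))
    · -- A, B : contradiction via disjointness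
      exact absurd (hVa x s hvc)
        (Set.disjoint_left.mp hdisj2 ⟨t', (h1a x' u' t' (hO1 hO')).2, hs'.symm⟩)
    · -- A, C
      exact absurd (hVa x s hvc)
        (Set.disjoint_left.mp hdisj3 ⟨t', (h1a u' x' t' (hO1 hO')).2, hs'.symm⟩)
    · -- B, A
      exact absurd (hVa x' s hvc')
        (Set.disjoint_left.mp hdisj2 ⟨t, (h1a x u t (hO1 hO)).2, hs.symm⟩)
    · -- B, B
      have htt : t = t' := hφc (hs.symm.trans hs')
      subst htt
      by_cases hxx : x = x' ∧ u = u'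
      · exact hEq hxx.1 hxx.2
      · have hcond : ¬((x = x' ∧ u = u') ∨ (x = u' ∧ u = x')) := by
          rintro (h | ⟨h1', h2'⟩)
          · exact hxx h
          · subst h1'; subst h2'
            exact ((hO2 x u t (hO1 hO)).mp hO) hO'
        obtain ⟨a1, a2, a3, a4, b1, b2, b3, b4⟩ :=
          h1strong x u t x' u' (hO1 hO) (hO1 hO') hcond
        exact hNeq a1 a4 a2 b2 (Ne.symm a3) (fun h => b3 h.symm)
    · -- B, C
      exact absurd ⟨t, (h1a x u t (hO1 hO)).2, hs.symm⟩
        (Set.disjoint_left.mp hdisj1.symm ⟨t', (h1a u' x' t' (hO1 hO')).2, hs'.symm⟩)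
    · -- C, A
      exact absurd (hVa x' s hvc')
        (Set.disjoint_left.mp hdisj3 ⟨t, (h1a u x t (hO1 hO)).2, hs.symm⟩)
    · -- C, B
      exact absurd ⟨t', (h1a x' u' t' (hO1 hO')).2, hs'.symm⟩
        (Set.disjoint_left.mp hdisj1.symm ⟨t, (h1a u x t (hO1 hO)).2, hs.symm⟩)
    · -- C, C
      have htt : t = t' := hφo (hs.symm.trans hs')
      subst htt
      by_cases hxx : x = x' ∧ u = u'
      · exact hEq hxx.1 hxx.2
      · have hcond : ¬((u = u' ∧ x = x') ∨ (u = x' ∧ x = u')) := by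
          rintro (⟨h1', h2'⟩ | ⟨h1', h2'⟩)
          · exact hxx ⟨h2', h1'⟩
          · subst h1'; subst h2'
            exact ((hO2 u x t (hO1 hO)).mp hO) hO'
        obtain ⟨a1, a2, a3, a4, b1, b2, b3, b4⟩ :=
          h1strong u x t u' x' (hO1 hO) (hO1 hO') hcond
        exact hNeq a4 a1 a3 b3 (Ne.symm a2) (fun h => b2 h.symm)
end

section
/- Suppose there exists a (K', F', Z', S')-placement delivery array with Z' = F' − g'. Then for any positive integer m divisible by 6, there exists a (K, F, Z, S)-placement delivery array with K = mK', F = mF', Z = mF' − 3g', and S = 8S'. -/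
open Finset

namespace IsPDA

variable {K F Z S : ℕ} {P : Fin F → Fin K → Option ℕ}

lemma card_filter_ne_none_s7 (hP : IsPDA K F Z S P) (k : Fin K) :
    #{j | P j k ≠ none} = F - Z := by
  have h : #{j | P j k = none} + #{j | P j k ≠ none} = F := by
    simpa using card_filter_add_card_filter_not (s := univ) (fun j => P j k = none)
  rw [hP.2.2.1 k] at h
  omega

lemma eq_none_of_eq_some_of_ne {j j' : Fin F} {k k' : Fin K} {s : ℕ} (hP : IsPDA K F Z S P)
    (h : P j k = some s) (h' : P j' k' = some s) (hj : j ≠ j') :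
    P j k' = none ∧ P j' k = none := by
  have hk : k ≠ k' := by
    rintro rfl
    exact hj (hP.2.2.2.2.1 j j' k s h h')
  exact hP.2.2.2.2.2 j j' k k' s hj hk h h'

end IsPDA

lemma mul_sub_one_add_le_mul {n N x s : ℕ} (hx : x ≤ n) (hs : s ≤ N) (hs1 : 1 ≤ s) :
    n * (s - 1) + x ≤ n * N := by
  calc n * (s - 1) + x ≤ n * (N - 1) + n := by gcongr
    _ = n * N := by
      rw [Nat.mul_sub_one, Nat.sub_add_cancel (Nat.le_mul_of_pos_right n (by omega))]

lemma mul_sub_one_add_inj {n x x' s s' : ℕ} (hx : 1 ≤ x ∧ x ≤ n) (hx' : 1 ≤ x' ∧ x' ≤ n)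
    (hs : 1 ≤ s) (hs' : 1 ≤ s') (h : n * (s - 1) + x = n * (s' - 1) + x') :
    x = x' ∧ s = s' := by
  have decode : ∀ x s, 1 ≤ x → x ≤ n →
      (n * (s - 1) + x - 1) / n = s - 1 ∧ (n * (s - 1) + x - 1) % n = x - 1 := by
    intro x s hx1 hxn
    refine (Nat.div_mod_unique (by omega)).2 ⟨?_, by omega⟩
    omega
  have h1 := decode x s hx.1 hx.2
  have h2 := decode x' s' hx'.1 hx'.2
  rw [h] at h1
  omega

section Kronecker

variable {K₁ F₁ Z₁ S₁ K₂ F₂ Z₂ S₂ : ℕ} {A : Fin F₁ → Fin K₁ → Option ℕ}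
  {B : Fin F₂ → Fin K₂ → Option ℕ}

def kroneckerArray (S₁ : ℕ) (A : Fin F₁ → Fin K₁ → Option ℕ) (B : Fin F₂ → Fin K₂ → Option ℕ)
    (r : Fin (F₁ * F₂)) (c : Fin (K₁ * K₂)) : Option ℕ :=
  Option.map₂ (fun x s => S₁ * (s - 1) + x)
    (A (finProdFinEquiv.symm r).1 (finProdFinEquiv.symm c).1)
    (B (finProdFinEquiv.symm r).2 (finProdFinEquiv.symm c).2)

lemma kroneckerArray_apply (a : Fin F₁) (j : Fin F₂) (b : Fin K₁) (k : Fin K₂) :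
    kroneckerArray S₁ A B (finProdFinEquiv (a, j)) (finProdFinEquiv (b, k)) =
      Option.map₂ (fun x s => S₁ * (s - 1) + x) (A a b) (B j k) := by
  simp [kroneckerArray]

lemma kroneckerArray_eq_none_iff {a : Fin F₁} {j : Fin F₂} {b : Fin K₁} {k : Fin K₂} :
    kroneckerArray S₁ A B (finProdFinEquiv (a, j)) (finProdFinEquiv (b, k)) = none ↔
      A a b = none ∨ B j k = none := by
  rw [kroneckerArray_apply, Option.map₂_eq_none_iff]

lemma kroneckerArray_eq_some_iff {a : Fin F₁} {j : Fin F₂} {b : Fin K₁} {k : Fin K₂} {y : ℕ} :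
    kroneckerArray S₁ A B (finProdFinEquiv (a, j)) (finProdFinEquiv (b, k)) = some y ↔
      ∃ x s, A a b = some x ∧ B j k = some s ∧ S₁ * (s - 1) + x = y := by
  simp [kroneckerArray_apply, Option.map₂_eq_some_iff]

lemma card_filter_kroneckerArray_ne_none (b : Fin K₁) (k : Fin K₂) :
    #{r | kroneckerArray S₁ A B r (finProdFinEquiv (b, k)) ≠ none} =
      #{a | A a b ≠ none} * #{j | B j k ≠ none} := by
  rw [← card_product]
  refine card_equiv finProdFinEquiv.symm fun r => ?_
  obtain ⟨⟨a, j⟩, rfl⟩ := finProdFinEquiv.surjective r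
  simp [kroneckerArray_eq_none_iff]

lemma eq_some_of_kroneckerArray_eq_some (hA : IsPDA K₁ F₁ Z₁ S₁ A) (hB : IsPDA K₂ F₂ Z₂ S₂ B)
    {a a' : Fin F₁} {j j' : Fin F₂} {b b' : Fin K₁} {k k' : Fin K₂} {y : ℕ}
    (h : kroneckerArray S₁ A B (finProdFinEquiv (a, j)) (finProdFinEquiv (b, k)) = some y)
    (h' : kroneckerArray S₁ A B (finProdFinEquiv (a', j')) (finProdFinEquiv (b', k')) = some y) :
    ∃ x s, A a b = some x ∧ A a' b' = some x ∧ B j k = some s ∧ B j' k' = some s := by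
  obtain ⟨x, s, hx, hs, rfl⟩ := kroneckerArray_eq_some_iff.1 h
  obtain ⟨x', s', hx', hs', hy⟩ := kroneckerArray_eq_some_iff.1 h'
  obtain ⟨rfl, rfl⟩ := mul_sub_one_add_inj (hA.1 _ _ _ hx') (hA.1 _ _ _ hx) (hB.1 _ _ _ hs').1
    (hB.1 _ _ _ hs).1 hy
  exact ⟨x', s', hx, hx', hs, hs'⟩

lemma exists_kroneckerArray_eq_some (hA : IsPDA K₁ F₁ Z₁ S₁ A) (hB : IsPDA K₂ F₂ Z₂ S₂ B)
    {y : ℕ} (hy1 : 1 ≤ y) (hy2 : y ≤ S₁ * S₂) : ∃ r c, kroneckerArray S₁ A B r c = some y := by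
  have hS₁ : 0 < S₁ := Nat.pos_of_ne_zero (by rintro rfl; omega)
  have hq : (y - 1) / S₁ < S₂ := Nat.div_lt_of_lt_mul (by omega)
  obtain ⟨a, b, hab⟩ := hA.2.1 ((y - 1) % S₁ + 1) (by omega)
    (by have := Nat.mod_lt (y - 1) hS₁; omega)
  obtain ⟨j, k, hjk⟩ := hB.2.1 ((y - 1) / S₁ + 1) (Nat.le_add_left 1 _) hq
  refine ⟨finProdFinEquiv (a, j), finProdFinEquiv (b, k),
    kroneckerArray_eq_some_iff.2 ⟨_, _, hab, hjk, ?_⟩⟩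
  have := Nat.div_add_mod (y - 1) S₁
  simp only [Nat.add_sub_cancel]
  omega

lemma card_filter_kroneckerArray_eq_none (hA : IsPDA K₁ F₁ Z₁ S₁ A)
    (hB : IsPDA K₂ F₂ Z₂ S₂ B) (c : Fin (K₁ * K₂)) :
    #{r | kroneckerArray S₁ A B r c = none} = F₁ * F₂ - (F₁ - Z₁) * (F₂ - Z₂) := by
  obtain ⟨⟨b, k⟩, rfl⟩ := finProdFinEquiv.surjective c
  have h := card_filter_add_card_filter_not (s := univ)
    (fun r => kroneckerArray S₁ A B r (finProdFinEquiv (b, k)) = none)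
  rw [card_filter_kroneckerArray_ne_none, hA.card_filter_ne_none_s7, hB.card_filter_ne_none_s7,
    card_univ, Fintype.card_fin] at h
  omega

theorem IsPDA.kronecker (hA : IsPDA K₁ F₁ Z₁ S₁ A) (hB : IsPDA K₂ F₂ Z₂ S₂ B) :
    IsPDA (K₁ * K₂) (F₁ * F₂) (F₁ * F₂ - (F₁ - Z₁) * (F₂ - Z₂)) (S₁ * S₂)
      (kroneckerArray S₁ A B) := by
  refine ⟨fun r c y h => ?_, fun y hy1 hy2 => exists_kroneckerArray_eq_some hA hB hy1 hy2,
    card_filter_kroneckerArray_eq_none hA hB, fun r c c' y h h' => ?_,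
    fun r r' c y h h' => ?_, fun r r' c c' y hr _ h h' => ?_⟩
  · obtain ⟨⟨a, j⟩, rfl⟩ := finProdFinEquiv.surjective r
    obtain ⟨⟨b, k⟩, rfl⟩ := finProdFinEquiv.surjective c
    obtain ⟨x, s, hx, hs, rfl⟩ := kroneckerArray_eq_some_iff.1 h
    have hx := hA.1 _ _ _ hx
    have hs := hB.1 _ _ _ hs
    exact ⟨by omega, mul_sub_one_add_le_mul hx.2 hs.2 hs.1⟩
  · obtain ⟨⟨a, j⟩, rfl⟩ := finProdFinEquiv.surjective r
    obtain ⟨⟨b, k⟩, rfl⟩ := finProdFinEquiv.surjective c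
    obtain ⟨⟨b', k'⟩, rfl⟩ := finProdFinEquiv.surjective c'
    obtain ⟨x, s, hx, hx', hs, hs'⟩ := eq_some_of_kroneckerArray_eq_some hA hB h h'
    rw [hA.2.2.2.1 a b b' x hx hx', hB.2.2.2.1 j k k' s hs hs']
  · obtain ⟨⟨a, j⟩, rfl⟩ := finProdFinEquiv.surjective r
    obtain ⟨⟨a', j'⟩, rfl⟩ := finProdFinEquiv.surjective r'
    obtain ⟨⟨b, k⟩, rfl⟩ := finProdFinEquiv.surjective c
    obtain ⟨x, s, hx, hx', hs, hs'⟩ := eq_some_of_kroneckerArray_eq_some hA hB h h'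
    rw [hA.2.2.2.2.1 a a' b x hx hx', hB.2.2.2.2.1 j j' k s hs hs']
  · obtain ⟨⟨a, j⟩, rfl⟩ := finProdFinEquiv.surjective r
    obtain ⟨⟨a', j'⟩, rfl⟩ := finProdFinEquiv.surjective r'
    obtain ⟨⟨b, k⟩, rfl⟩ := finProdFinEquiv.surjective c
    obtain ⟨⟨b', k'⟩, rfl⟩ := finProdFinEquiv.surjective c'
    obtain ⟨x, s, hx, hx', hs, hs'⟩ := eq_some_of_kroneckerArray_eq_some hA hB h h'
    simp only [kroneckerArray_eq_none_iff]
    by_cases ha : a = a'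
    · have hj : j ≠ j' := by rintro rfl; exact hr (by rw [ha])
      obtain ⟨h₁, h₂⟩ := hB.eq_none_of_eq_some_of_ne hs hs' hj
      exact ⟨Or.inr h₁, Or.inr h₂⟩
    · obtain ⟨h₁, h₂⟩ := hA.eq_none_of_eq_some_of_ne hx hx' ha
      exact ⟨Or.inl h₁, Or.inl h₂⟩

end Kronecker

section Band

def bandColour : ZMod 6 → Fin 3 → Fin 8 :=
  ![![0, 1, 2], ![3, 4, 0], ![5, 1, 3], ![6, 4, 2], ![7, 1, 6], ![5, 4, 7]]

lemma bandColour_surjective : ∀ c : Fin 8, ∃ u d, bandColour u d = c := by decide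

lemma bandColour_injective (u : ZMod 6) : Function.Injective (bandColour u) := by
  revert u; decide

-- Read modulo 6: if cells `(a, a + d)` and `(a', a' + d')` share a colour and the crossing cell
-- `(a, a' + d')` lies in the band, at offset `t`, then `t = d'`, hence `a = a'`.
lemma bandColour_cross : ∀ (u u' : ZMod 6) (d d' t : Fin 3), bandColour u d = bandColour u' d' →
    u + (t : ℕ) = u' + (d' : ℕ) → t = d' := by decide

variable {m : ℕ}

def bandArray (m : ℕ) (a b : Fin m) : Option ℕ :=
  if h : (b - a).val < 3 then some ((bandColour (a : ℕ) ⟨(b - a).val, h⟩).val + 1) else none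

lemma bandArray_eq_none_iff {a b : Fin m} : bandArray m a b = none ↔ 3 ≤ (b - a).val := by
  simp [bandArray]

lemma bandArray_eq_some_iff {a b : Fin m} {y : ℕ} :
    bandArray m a b = some y ↔
      ∃ h : (b - a).val < 3, (bandColour (a : ℕ) ⟨(b - a).val, h⟩).val + 1 = y := by
  simp [bandArray]

lemma Fin.natCast_val_add_of_dvd {n : ℕ} (hn : n ∣ m) (a b : Fin m) :
    (((a + b : Fin m) : ℕ) : ZMod n) = (a : ℕ) + (b : ℕ) := by
  rw [Fin.val_add, ← Nat.cast_add, ZMod.natCast_eq_natCast_iff', Nat.mod_mod_of_dvd _ hn]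

variable [NeZero m]

lemma card_filter_sub_val_lt (b : Fin m) (n : ℕ) (hn : n < m) :
    #{a : Fin m | (b - a).val < n} = n := by
  calc #{a : Fin m | (b - a).val < n} = #(Iio (⟨n, hn⟩ : Fin m)) :=
        card_equiv (Equiv.subLeft b) fun a => by simp [Fin.lt_def]
    _ = n := Fin.card_Iio _

lemma eq_of_bandColour_eq (hm : 6 ∣ m) {a a' b b' : Fin m} (hd : (b - a).val < 3)
    (hd' : (b' - a').val < 3) (ht : (b' - a).val < 3)
    (h : bandColour (a : ℕ) ⟨(b - a).val, hd⟩ = bandColour (a' : ℕ) ⟨(b' - a').val, hd'⟩) :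
    a = a' := by
  have hsum : ((a : ℕ) : ZMod 6) + ((b' - a : Fin m) : ℕ) =
      ((a' : ℕ) : ZMod 6) + ((b' - a' : Fin m) : ℕ) := by
    rw [← Fin.natCast_val_add_of_dvd hm, ← Fin.natCast_val_add_of_dvd hm, add_sub_cancel,
      add_sub_cancel]
  have hoffset := bandColour_cross _ _ _ _ ⟨_, ht⟩ h hsum
  exact sub_right_inj.1 (Fin.ext (Fin.mk.inj_iff.1 hoffset))

theorem isPDA_bandArray (hm : 6 ∣ m) : IsPDA m m (m - 3) 8 (bandArray m) := by
  have h6 : 6 ≤ m := Nat.le_of_dvd (Nat.pos_of_neZero m) hm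
  refine ⟨fun a b y h => ?_, fun y hy1 hy8 => ?_, fun b => ?_, fun a b b' y h h' => ?_,
    fun a a' b y h h' => ?_, fun a a' b b' y ha _ h h' => ?_⟩
  · obtain ⟨hd, rfl⟩ := bandArray_eq_some_iff.1 h
    exact ⟨by omega, by omega⟩
  · obtain ⟨u, d, hud⟩ := bandColour_surjective ⟨y - 1, by omega⟩
    set a : Fin m := ⟨u.val, by have := u.val_lt; omega⟩
    refine ⟨a, a + ⟨d, by omega⟩, bandArray_eq_some_iff.2 ⟨by simp, ?_⟩⟩
    simp only [ZMod.natCast_val, ZMod.cast_id', id_eq, add_sub_cancel_left, Fin.eta, hud, a]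
    omega
  · have h := card_filter_add_card_filter_not (s := univ) fun a : Fin m => (b - a).val < 3
    simp only [card_filter_sub_val_lt b 3 (by omega), not_lt, card_univ, Fintype.card_fin] at h
    simp only [bandArray_eq_none_iff]
    omega
  · obtain ⟨hd, hy⟩ := bandArray_eq_some_iff.1 h
    obtain ⟨hd', rfl⟩ := bandArray_eq_some_iff.1 h'
    have hdd := bandColour_injective _ (Fin.ext (by omega) :
      bandColour (a : ℕ) ⟨_, hd⟩ = bandColour (a : ℕ) ⟨_, hd'⟩)
    exact sub_left_inj.1 (Fin.ext (Fin.mk.inj_iff.1 hdd))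
  · obtain ⟨hd, hy⟩ := bandArray_eq_some_iff.1 h
    obtain ⟨hd', rfl⟩ := bandArray_eq_some_iff.1 h'
    exact eq_of_bandColour_eq hm hd hd' hd (Fin.ext (by omega))
  · obtain ⟨hd, hy⟩ := bandArray_eq_some_iff.1 h
    obtain ⟨hd', rfl⟩ := bandArray_eq_some_iff.1 h'
    have hcol : bandColour (a : ℕ) ⟨_, hd⟩ = bandColour (a' : ℕ) ⟨_, hd'⟩ := Fin.ext (by omega)
    simp only [bandArray_eq_none_iff, ← not_lt]
    exact ⟨fun ht => ha (eq_of_bandColour_eq hm hd hd' ht hcol),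
      fun ht => ha (eq_of_bandColour_eq hm hd' hd ht hcol.symm).symm⟩

end Band

/-- From a `(K',F',Z',S')`-PDA with `Z' = F' - g'`, for every positive `m`
divisible by `6`, there exists an `(mK', mF', mF' - 3g', 8S')`-PDA. -/
theorem pda_cycle_product (K' F' Z' S' g' m : ℕ) (hg : g' ≤ F') (hZ : Z' = F' - g')
    (hm : 0 < m) (hm6 : 6 ∣ m)
    (hP : ∃ P : Fin F' → Fin K' → Option ℕ, IsPDA K' F' Z' S' P) :
    ∃ P : Fin (m * F') → Fin (m * K') → Option ℕ,
      IsPDA (m * K') (m * F') (m * F' - 3 * g') (8 * S') P := by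
  obtain ⟨P, hP⟩ := hP
  have : NeZero m := ⟨hm.ne'⟩
  have hstars : m * F' - (m - (m - 3)) * (F' - Z') = m * F' - 3 * g' := by
    rw [hZ, Nat.sub_sub_self (by omega : 3 ≤ m), Nat.sub_sub_self hg]
  exact ⟨kroneckerArray 8 (bandArray m) P, hstars ▸ (isPDA_bandArray hm6).kronecker hP⟩
end

section
/- Let n, a, b be positive integers with a + b ≤ n. Let Γ = (V, W, E) be the bipartite graph with V the a-subsets of [n], W the b-subsets of [n], and edges the disjoint pairs (A,B) with A∩B=∅. Then the assignment giving edge (A,B) the color A∪B (a member of the (a+b)-subsets of [n]) is a strong edge coloring of Γ. -/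
/-- On the bipartite graph whose parts are the `a`-subsets and the `b`-subsets
of `[n]` (with `a + b ≤ n`), with edges the disjoint pairs `(A,B)`, assigning
edge `(A,B)` the color `A ∪ B` is a strong edge coloring with colors from the
`(a+b)`-subsets of `[n]`. -/
theorem disjointness_union_strongEdgeColoring (n a b : ℕ)
    (ha : 0 < a) (hb : 0 < b) (hab : a + b ≤ n) :
    IsStrongEdgeColoringOn
      {p : Finset (Fin n) × Finset (Fin n) |
        p.1.card = a ∧ p.2.card = b ∧ p.1 ∩ p.2 = ∅}
      {c : Finset (Fin n) | c.card = a + b}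
      {t : Finset (Fin n) × Finset (Fin n) × Finset (Fin n) |
        (t.1.card = a ∧ t.2.1.card = b ∧ t.1 ∩ t.2.1 = ∅) ∧
        t.2.2 = t.1 ∪ t.2.1} := by
  refine ⟨?_, ?_, ?_, ?_⟩
  · rintro v w s ⟨⟨hv, hw, hd⟩, hs⟩
    dsimp only at hv hw hd hs
    refine ⟨⟨hv, hw, hd⟩, ?_⟩
    simp only [Set.mem_setOf_eq, hs]
    rw [Finset.card_union_of_disjoint (Finset.disjoint_iff_inter_eq_empty.mpr hd), hv, hw]
  · rintro s hs
    simp only [Set.mem_setOf_eq] at hs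
    obtain ⟨v, hvs, hv⟩ := Finset.exists_subset_card_eq (s := s) (n := a) (by omega)
    refine ⟨v, s \ v, ⟨⟨hv, ?_, ?_⟩, ?_⟩⟩
    · rw [Finset.card_sdiff_of_subset hvs, hs, hv]; omega
    · rw [Finset.inter_sdiff_self]
    · rw [Finset.union_sdiff_of_subset hvs]
  · rintro v w ⟨hv, hw, hd⟩
    exact ⟨v ∪ w, ⟨⟨hv, hw, hd⟩, rfl⟩, fun s hs => hs.2⟩
  · rintro v w s v' w' ⟨⟨hv, hw, hd⟩, hs⟩ ⟨⟨hv', hw', hd'⟩, hs'⟩ hne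
    dsimp only at hv hw hd hs hv' hw' hd' hs'
    have hdis : Disjoint v w := Finset.disjoint_iff_inter_eq_empty.mpr hd
    have hdis' : Disjoint v' w' := Finset.disjoint_iff_inter_eq_empty.mpr hd'
    have hsu : v ∪ w = v' ∪ w' := by rw [← hs, ← hs']
    have hvw : w = s \ v := by
      rw [hs, Finset.union_sdiff_left, Finset.sdiff_eq_self_of_disjoint hdis.symm]
    have hvw' : w' = s \ v' := by
      rw [hs', Finset.union_sdiff_left, Finset.sdiff_eq_self_of_disjoint hdis'.symm]
    have key : v ≠ v' := by
      rintro rfl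
      apply hne
      rw [hvw, hvw']
    have key2 : w ≠ w' := by
      rintro rfl
      apply hne
      have : v = s \ w := by
        rw [hs, Finset.union_sdiff_right, Finset.sdiff_eq_self_of_disjoint hdis]
      have : v' = s \ w := by
        rw [hs', Finset.union_sdiff_right, Finset.sdiff_eq_self_of_disjoint hdis']
      rw [‹v = s \ w›, ‹v' = s \ w›]
    refine ⟨key, key2, ?_, ?_⟩
    · rintro ⟨-, -, hvw'e⟩
      dsimp only at hvw'e
      apply key
      have hsub : v ⊆ v' := by
        intro x hx
        have hxs : x ∈ s := by rw [hs]; exact Finset.mem_union_left _ hx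
        by_contra hxv'
        have : x ∈ w' := by rw [hvw']; exact Finset.mem_sdiff.mpr ⟨hxs, hxv'⟩
        have : x ∈ v ∩ w' := Finset.mem_inter.mpr ⟨hx, this⟩
        rw [hvw'e] at this
        exact absurd this (Finset.notMem_empty x)
      exact Finset.eq_of_subset_of_card_le hsub (by rw [hv, hv'])
    · rintro ⟨-, -, hv'we⟩
      dsimp only at hv'we
      apply key
      have hsub : v' ⊆ v := by
        intro x hx
        have hxs : x ∈ s := by rw [hs']; exact Finset.mem_union_left _ hx
        by_contra hxv
        have : x ∈ w := by rw [hvw]; exact Finset.mem_sdiff.mpr ⟨hxs, hxv⟩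
        have : x ∈ v' ∩ w := Finset.mem_inter.mpr ⟨hx, this⟩
        rw [hv'we] at this
        exact absurd this (Finset.notMem_empty x)
      exact (Finset.eq_of_subset_of_card_le hsub (by rw [hv, hv'])).symm
end

section
/- Let n, a, b, t be positive integers with 0 < a, b < n and 0 ≤ t ≤ min(a,b). Let Γ = (V, W, E) be the bipartite graph with V the a-subsets of [n], W the b-subsets of [n], and edges the pairs (A,B) with |A∩B| = t. Then assigning to edge (A,B) the color (AΔB, A∩B), where AΔB is the symmetric difference, is a strong edge coloring of Γ with colors from the set of pairs (D,I) where D is an (a+b−2t)-subset, I is a t-subset, and D∩I=∅. -/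
open Finset

private lemma detA {n : ℕ} (A B : Finset (Fin n)) :
    A = ((A \ B ∪ B \ A) \ B) ∪ A ∩ B := by
  ext x; simp only [mem_union, mem_sdiff, mem_inter]; tauto

private lemma detB {n : ℕ} (A B : Finset (Fin n)) :
    B = ((A \ B ∪ B \ A) \ A) ∪ A ∩ B := by
  ext x; simp only [mem_union, mem_sdiff, mem_inter]; tauto

private lemma splitB {n : ℕ} (A B : Finset (Fin n)) :
    B = B \ A ∪ A ∩ B := by
  ext x; simp only [mem_union, mem_sdiff, mem_inter]; tauto

private lemma auxBeqB {n a b t : ℕ} (hta : t ≤ a) (htb : t ≤ b)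
    {A B A' B' : Finset (Fin n)}
    (hA : A.card = a) (hB : B.card = b) (ht : (A ∩ B).card = t)
    (hA' : A'.card = a) (hB' : B'.card = b) (ht' : (A' ∩ B').card = t)
    (hD : A \ B ∪ B \ A = A' \ B' ∪ B' \ A') (hI : A ∩ B = A' ∩ B')
    (hE : (A ∩ B').card = t) : B = B' := by
  have hIA : A ∩ B ⊆ A ∩ B' := by
    intro x hx
    rw [mem_inter] at hx ⊢
    refine ⟨hx.1, ?_⟩
    have h2 : x ∈ A' ∩ B' := hI ▸ (mem_inter.mpr hx)
    exact (mem_inter.mp h2).2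
  have hIeq : A ∩ B = A ∩ B' := eq_of_subset_of_card_le hIA (by omega)
  have c1 : (A ∩ B).card + (A \ B).card = A.card := card_inter_add_card_sdiff A B
  have c2 : (B ∩ A).card + (B \ A).card = B.card := card_inter_add_card_sdiff B A
  have c3 : (B' ∩ A').card + (B' \ A').card = B'.card := card_inter_add_card_sdiff B' A'
  rw [inter_comm] at c2
  rw [inter_comm, ← hI] at c3
  have hdisj : Disjoint (A \ B) (B' \ A') := by
    rw [disjoint_left]
    intro x hx hx'
    rw [mem_sdiff] at hx hx'
    have h3 : x ∈ A ∩ B := hIeq ▸ mem_inter.mpr ⟨hx.1, hx'.1⟩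
    exact hx.2 (mem_inter.mp h3).2
  have hsub : A \ B ∪ B' \ A' ⊆ A \ B ∪ B \ A := by
    apply union_subset subset_union_left
    rw [hD]; exact subset_union_right
  have hcard1 : (A \ B ∪ B' \ A').card = (A \ B).card + (B' \ A').card :=
    card_union_of_disjoint hdisj
  have hcard2 : (A \ B ∪ B \ A).card = (A \ B).card + (B \ A).card :=
    card_union_of_disjoint disjoint_sdiff_sdiff
  have hUeq : A \ B ∪ B' \ A' = A \ B ∪ B \ A :=
    eq_of_subset_of_card_le hsub (by omega)
  have hBA : B \ A = B' \ A' := by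
    have e1 : (A \ B ∪ B \ A) \ (A \ B) = B \ A :=
      union_sdiff_cancel_left disjoint_sdiff_sdiff
    have e2 : (A \ B ∪ B' \ A') \ (A \ B) = B' \ A' :=
      union_sdiff_cancel_left hdisj
    rw [← e1, ← hUeq, e2]
  calc B = B \ A ∪ A ∩ B := splitB A B
    _ = B' \ A' ∪ A' ∩ B' := by rw [hBA, hI]
    _ = B' := (splitB A' B').symm

/-- On the bipartite graph whose parts are the `a`-subsets and the `b`-subsets
of `[n]` (`0 < a, b < n`, `0 ≤ t ≤ min a b`), with edges the pairs `(A,B)` with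
`|A ∩ B| = t`, assigning edge `(A,B)` the color `(A Δ B, A ∩ B)` is a strong
edge coloring with colors from the pairs `(D,I)` with `|D| = a + b - 2t`,
`|I| = t` and `D ∩ I = ∅`. -/
theorem intersection_symmDiff_strongEdgeColoring (n a b t : ℕ)
    (ha : 0 < a) (ha' : a < n) (hb : 0 < b) (hb' : b < n)
    (hta : t ≤ a) (htb : t ≤ b) :
    IsStrongEdgeColoringOn
      {p : Finset (Fin n) × Finset (Fin n) |
        p.1.card = a ∧ p.2.card = b ∧ (p.1 ∩ p.2).card = t}
      {c : Finset (Fin n) × Finset (Fin n) |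
        c.1.card = a + b - 2 * t ∧ c.2.card = t ∧ c.1 ∩ c.2 = ∅}
      {tr : Finset (Fin n) × Finset (Fin n) × (Finset (Fin n) × Finset (Fin n)) |
        (tr.1.card = a ∧ tr.2.1.card = b ∧ (tr.1 ∩ tr.2.1).card = t) ∧
        tr.2.2 = (tr.1 \ tr.2.1 ∪ tr.2.1 \ tr.1, tr.1 ∩ tr.2.1)} := by
  refine ⟨?_, ?_, ?_, ?_⟩
  · rintro v w s ⟨⟨hv, hw, ht⟩, hs⟩
    dsimp only at hv hw ht hs
    refine ⟨⟨hv, hw, ht⟩, ?_⟩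
    subst hs
    have c1 : (v ∩ w).card + (v \ w).card = v.card := card_inter_add_card_sdiff v w
    have c2 : (w ∩ v).card + (w \ v).card = w.card := card_inter_add_card_sdiff w v
    rw [inter_comm] at c2
    refine ⟨?_, ht, ?_⟩
    · show (v \ w ∪ w \ v).card = a + b - 2 * t
      rw [card_union_of_disjoint disjoint_sdiff_sdiff]; omega
    · show (v \ w ∪ w \ v) ∩ (v ∩ w) = ∅
      ext x; simp only [mem_union, mem_sdiff, mem_inter, notMem_empty, iff_false]
      tauto
  · rintro ⟨D, I⟩ ⟨hD, hI, hDI⟩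
    simp only [Set.mem_setOf_eq] at hD hI hDI
    have hDI' : ∀ x, x ∈ D → x ∈ I → False := fun x h1 h2 =>
      Finset.eq_empty_iff_forall_notMem.mp hDI x (mem_inter.mpr ⟨h1, h2⟩)
    obtain ⟨D1, hD1sub, hD1card⟩ : ∃ D1 ⊆ D, D1.card = a - t :=
      exists_subset_card_eq (by omega)
    refine ⟨D1 ∪ I, (D \ D1) ∪ I, ?_⟩
    have hmemD1 : ∀ x, x ∈ D1 → x ∈ D := fun x hx => hD1sub hx
    have hAB : (D1 ∪ I) ∩ ((D \ D1) ∪ I) = I := by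
      ext x
      simp only [mem_inter, mem_union, mem_sdiff]
      have := hmemD1 x; have := hDI' x
      constructor
      · rintro ⟨h1 | h1, h2 | h2⟩ <;> tauto
      · intro h; tauto
    have hsd : (D1 ∪ I) \ ((D \ D1) ∪ I) ∪ ((D \ D1) ∪ I) \ (D1 ∪ I) = D := by
      ext x
      simp only [mem_union, mem_sdiff]
      have := hmemD1 x; have := hDI' x
      have h1 := hmemD1 x; have h2 := hDI' x
      by_cases hx1 : x ∈ D1 <;> tauto
    have hDcard1 : Disjoint D1 I := by
      rw [disjoint_left]; intro x h1 h2; exact hDI' x (hmemD1 x h1) h2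
    have hDcard2 : Disjoint (D \ D1) I := by
      rw [disjoint_left]; intro x h1 h2; exact hDI' x (mem_sdiff.mp h1).1 h2
    have hcA : (D1 ∪ I).card = a := by
      rw [card_union_of_disjoint hDcard1]; omega
    have hcB : ((D \ D1) ∪ I).card = b := by
      rw [card_union_of_disjoint hDcard2, card_sdiff_of_subset hD1sub]; omega
    have hcT : ((D1 ∪ I) ∩ ((D \ D1) ∪ I)).card = t := by rw [hAB]; exact hI
    exact ⟨⟨hcA, hcB, hcT⟩, by rw [Prod.mk.injEq]; exact ⟨hsd.symm, hAB.symm⟩⟩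
  · rintro v w hE
    exact ⟨(v \ w ∪ w \ v, v ∩ w), ⟨hE, rfl⟩, fun y hy => hy.2⟩
  · rintro v w s v' w' ⟨⟨hv, hw, ht⟩, hs⟩ ⟨⟨hv', hw', ht'⟩, hs'⟩ hne
    have heq : (v \ w ∪ w \ v, v ∩ w) = (v' \ w' ∪ w' \ v', v' ∩ w') := by
      rw [← hs, ← hs']
    rw [Prod.mk.injEq] at heq
    obtain ⟨hD, hI⟩ := heq
    have hprodne : v ≠ v' ∨ w ≠ w' := by
      by_contra h; push_neg at h; exact hne (Prod.ext h.1 h.2)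
    have hvdet : w = w' → v = v' := by
      intro h
      calc v = ((v \ w ∪ w \ v) \ w) ∪ v ∩ w := detA v w
        _ = ((v' \ w' ∪ w' \ v') \ w') ∪ v' ∩ w' := by rw [hD, hI, h]
        _ = v' := (detA v' w').symm
    have hwdet : v = v' → w = w' := by
      intro h
      calc w = ((v \ w ∪ w \ v) \ v) ∪ v ∩ w := detB v w
        _ = ((v' \ w' ∪ w' \ v') \ v') ∪ v' ∩ w' := by rw [hD, hI, h]
        _ = w' := (detB v' w').symm
    refine ⟨?_, ?_, ?_, ?_⟩
    · intro h; exact hne (Prod.ext h (hwdet h))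
    · intro h; exact hne (Prod.ext (hvdet h) h)
    · rintro ⟨-, -, hEc⟩
      have hww : w = w' := auxBeqB hta htb hv hw ht hv' hw' ht' hD hI hEc
      exact hne (Prod.ext (hvdet hww) hww)
    · rintro ⟨-, -, hEc⟩
      have hww : w' = w := auxBeqB hta htb hv' hw' ht' hv hw ht hD.symm hI.symm hEc
      exact hne (Prod.ext (hvdet hww.symm) hww.symm)
end

section
/- Suppose strong edge colorings E1 on bipartite Γ1=(V1,W1,E1) and E2 on bipartite Γ2=(V2,W2,E2) share the same color set, and form the combined coloring E' = {(y,(x,u),(s,v)) : (x,y,s)∈E1, (u,v,s)∈E2} on the bipartite graph with parts W1 and the set of pairs (x,u) matched through a common color. If every vertex (x,u) in the second part has the same degree (equal to the number of y with (x,y,s)∈E1 and (u,v,s)∈E2 for some s,v), then the array with rows indexed by W1, columns by the pairs (x,u), and entries given by E' (with * for non-edges) is a placement delivery array with number of integers S = |{(s,v) : (u,v,s)∈E2 for some u}|. -/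
/-- A placement delivery array with abstract row type `F`, column type `K` and
color (integer) set `Cols`: entries are `*` (`none`) or colors from `Cols`,
every color used, exactly `Z` stars per column, no color repeated in a row or
column, and the crossing-star condition. -/
def IsPDAArray {F K C : Type*} [Fintype F] (A : F → K → Option C) (Z : ℕ)
    (Cols : Set C) : Prop :=
  (∀ j k c, A j k = some c → c ∈ Cols) ∧
  (∀ c ∈ Cols, ∃ j k, A j k = some c) ∧
  (∀ k, (Finset.univ.filter fun j => (A j k).isSome = false).card = Z) ∧
  (∀ j k k' c, A j k = some c → A j k' = some c → k = k') ∧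
  (∀ j j' k c, A j k = some c → A j' k = some c → j = j') ∧
  (∀ j j' k k' c, j ≠ j' → k ≠ k' → A j k = some c → A j' k' = some c →
    A j k' = none ∧ A j' k = none)

/-- Combining strong edge colorings `C1`, `C2` with the same color set into
`E' = {(y,(x,u),(s,v)) : (x,y,s) ∈ C1, (u,v,s) ∈ C2}`: if the array `A` with
rows `W1`, columns the pairs `(x,u)` matched through a common color, and
entries given by `E'` (with `*` for non-edges) has constant column degree `d`,
then it is a placement delivery array whose set of integers is
`{(s,v) : (u,v,s) ∈ C2 for some u}`. -/
theorem combined_coloring_gives_pda {V1 W1 V2 W2 S : Type*} [Fintype W1]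
    (E1 : Set (V1 × W1)) (E2 : Set (V2 × W2))
    (C1 : Set (V1 × W1 × S)) (C2 : Set (V2 × W2 × S))
    (h1 : IsStrongEdgeColoringOn E1 Set.univ C1)
    (h2 : IsStrongEdgeColoringOn E2 Set.univ C2)
    (A : W1 → V1 × V2 → Option (S × W2))
    (hA : ∀ y p sv, A y p = some sv ↔
      ((p.1, y, sv.1) ∈ C1 ∧ (p.2, sv.2, sv.1) ∈ C2))
    (d : ℕ)
    (hdeg : ∀ p : V1 × V2, (∃ y v s, (p.1, y, s) ∈ C1 ∧ (p.2, v, s) ∈ C2) →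
      (Finset.univ.filter fun y => (A y p).isSome = true).card = d) :
    ∃ Z, IsPDAArray
      (fun (y : W1)
          (p : {q : V1 × V2 // ∃ y' v s, (q.1, y', s) ∈ C1 ∧ (q.2, v, s) ∈ C2}) =>
        A y p.1)
      Z {c : S × W2 | ∃ u, (u, c.2, c.1) ∈ C2} := by
  obtain ⟨h1e, h1u, h1ex, h1s⟩ := h1
  obtain ⟨h2e, h2u, h2ex, h2s⟩ := h2
  refine ⟨Fintype.card W1 - d, ?_, ?_, ?_, ?_, ?_, ?_⟩
  · rintro j ⟨p, hp⟩ ⟨s, v⟩ h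
    exact ⟨p.2, ((hA j p (s, v)).1 h).2⟩
  · rintro ⟨s, v⟩ ⟨u, hu⟩
    obtain ⟨x, y, hxy⟩ := h1u s (Set.mem_univ s)
    exact ⟨y, ⟨(x, u), y, v, s, hxy, hu⟩, (hA y (x, u) (s, v)).2 ⟨hxy, hu⟩⟩
  · rintro ⟨p, hp⟩
    have hd := hdeg p hp
    have := Finset.card_filter_add_card_filter_not
      (s := (Finset.univ : Finset W1)) (p := fun y => (A y p).isSome = true)
    simp only [Finset.card_univ] at this
    have heq : (Finset.univ.filter fun y => (A y p).isSome = false)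
        = (Finset.univ.filter fun y => ¬ ((A y p).isSome = true)) := by
      apply Finset.filter_congr
      intro y _
      simp only [Bool.not_eq_true]
    rw [heq]
    omega
  · rintro j ⟨p, hp⟩ ⟨p', hp'⟩ ⟨s, v⟩ h h'
    obtain ⟨ha1, ha2⟩ := (hA j p (s, v)).1 h
    obtain ⟨hb1, hb2⟩ := (hA j p' (s, v)).1 h'
    have hx : p.1 = p'.1 := by
      by_contra hne
      exact (h1s p.1 j s p'.1 j ha1 hb1 (by simp [hne])).2.1 rfl
    have hu : p.2 = p'.2 := by
      by_contra hne
      exact (h2s p.2 v s p'.2 v ha2 hb2 (by simp [hne])).2.1 rfl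
    exact Subtype.ext (Prod.ext hx hu)
  · rintro j j' ⟨p, hp⟩ ⟨s, v⟩ h h'
    obtain ⟨ha1, _⟩ := (hA j p (s, v)).1 h
    obtain ⟨hb1, _⟩ := (hA j' p (s, v)).1 h'
    by_contra hne
    exact (h1s p.1 j s p.1 j' ha1 hb1 (by simp [hne])).1 rfl
  · rintro j j' ⟨p, hp⟩ ⟨p', hp'⟩ ⟨s, v⟩ hj hk h h'
    obtain ⟨ha1, ha2⟩ := (hA j p (s, v)).1 h
    obtain ⟨hb1, hb2⟩ := (hA j' p' (s, v)).1 h'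
    have hu : p.2 = p'.2 := by
      by_contra hne
      exact (h2s p.2 v s p'.2 v ha2 hb2 (by simp [hne])).2.1 rfl
    have hx : p.1 ≠ p'.1 := by
      intro hxeq
      exact hk (Subtype.ext (Prod.ext hxeq hu))
    have key := h1s p.1 j s p'.1 j' ha1 hb1 (by simp [hx])
    refine ⟨?_, ?_⟩
    · show A j p' = none
      rcases h3 : A j p' with _ | sv
      · rfl
      · obtain ⟨hc1, _⟩ := (hA j p' sv).1 h3
        exact absurd ((h1e _ _ _ hc1).1) key.2.2.2
    · show A j' p = none
      rcases h3 : A j' p with _ | sv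
      · rfl
      · obtain ⟨hc1, _⟩ := (hA j' p sv).1 h3
        exact absurd ((h1e _ _ _ hc1).1) key.2.2.1
end
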